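/- arXiv:1706.00798 — 6 statements merged into one kernel-verified Lean document; each statement's English description precedes it below -/
import Mathlib

section
/- Let G be a finite simple graph and (b_1,…,b_k) a sequence of distinct vertices of G. Then there exist vertices a_1,…,a_k of G such that for every i = 1,…,k the force a_i→b_i is valid under CCR-Z_L with respect to the blue set V(G) ∖ {b_i, b_{i+1},…,b_k} if and only if (b_k, b_{k−1},…,b_1) is an L-sequence of G. -/
namespace ZFGrundy

variable {V : Type*}

/-- `u` is a member of the closed neighborhood `N[x]` of `x` in `G`. -/
def ClosedNbr (G : SimpleGraph V) (x u : V) : Prop := u = x ∨ G.Adj x u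

/-- CCR-Z: the force `x → y` is valid w.r.t. blue set `S` if `y ∉ S`, `y ∈ N(x)`,
and `N[x] \ {y} ⊆ S`. -/
def ZForce (G : SimpleGraph V) (S : Set V) (x y : V) : Prop :=
  y ∉ S ∧ G.Adj x y ∧ ∀ u, ClosedNbr G x u → u ≠ y → u ∈ S

/-- CCR-Z_ℓ̇: the force `x → y` is valid w.r.t. blue set `S` if `y ∉ S`, `y ∈ N[x]`,
and `N[x] \ {y} ⊆ S`. -/
def ZelldForce (G : SimpleGraph V) (S : Set V) (x y : V) : Prop :=
  y ∉ S ∧ ClosedNbr G x y ∧ ∀ u, ClosedNbr G x u → u ≠ y → u ∈ S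

/-- CCR-Z_−: the force `x → y` is valid w.r.t. blue set `S` if `y ∉ S`, `y ∈ N(x)`,
and `N(x) \ {y} ⊆ S`. -/
def ZminusForce (G : SimpleGraph V) (S : Set V) (x y : V) : Prop :=
  y ∉ S ∧ G.Adj x y ∧ ∀ u, G.Adj x u → u ≠ y → u ∈ S

/-- CCR-Z_L: either `x ≠ y` and the force is valid under CCR-Z_−, or `x = y` and the
force is valid under CCR-Z_ℓ̇. -/
def ZLForce (G : SimpleGraph V) (S : Set V) (x y : V) : Prop :=
  (x ≠ y ∧ ZminusForce G S x y) ∨ (x = y ∧ ZelldForce G S x y)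

/-- `B` is a zero forcing set of `G` with respect to the color change rule `force`:
there is an ordering `b 0, …, b (k-1)` of the vertices outside `B` and vertices
`a 0, …, a (k-1)` such that each force `a i → b i` is valid w.r.t. the blue set
consisting of all vertices other than `b i, b (i+1), …, b (k-1)`. -/
def IsZFS (G : SimpleGraph V) (force : SimpleGraph V → Set V → V → V → Prop)
    (B : Finset V) : Prop :=
  ∃ (k : ℕ) (b a : Fin k → V), Function.Injective b ∧
    (∀ v : V, v ∉ B ↔ ∃ i, b i = v) ∧
    ∀ i : Fin k, force G {v | ∀ j : Fin k, i ≤ j → v ≠ b j} (a i) (b i)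

/-- The zero forcing number with respect to the color change rule `force`. -/
noncomputable def zfNum (G : SimpleGraph V)
    (force : SimpleGraph V → Set V → V → V → Prop) : ℕ :=
  sInf {m : ℕ | ∃ B : Finset V, IsZFS G force B ∧ B.card = m}

/-- A Z-sequence: distinct vertices with `N(v i) \ ⋃_{j<i} N[v j] ≠ ∅`. -/
def IsZSeq (G : SimpleGraph V) {k : ℕ} (v : Fin k → V) : Prop :=
  Function.Injective v ∧
  ∀ i, ∃ u, G.Adj (v i) u ∧ ∀ j, j < i → ¬ ClosedNbr G (v j) u

/-- A dominating sequence: distinct vertices with `N[v i] \ ⋃_{j<i} N[v j] ≠ ∅`. -/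
def IsDomSeq (G : SimpleGraph V) {k : ℕ} (v : Fin k → V) : Prop :=
  Function.Injective v ∧
  ∀ i, ∃ u, ClosedNbr G (v i) u ∧ ∀ j, j < i → ¬ ClosedNbr G (v j) u

/-- A total dominating sequence: distinct vertices with `N(v i) \ ⋃_{j<i} N(v j) ≠ ∅`. -/
def IsTotDomSeq (G : SimpleGraph V) {k : ℕ} (v : Fin k → V) : Prop :=
  Function.Injective v ∧
  ∀ i, ∃ u, G.Adj (v i) u ∧ ∀ j, j < i → ¬ G.Adj (v j) u

/-- An L-sequence: distinct vertices with `N[v i] \ ⋃_{j<i} N(v j) ≠ ∅`. -/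
def IsLSeq (G : SimpleGraph V) {k : ℕ} (v : Fin k → V) : Prop :=
  Function.Injective v ∧
  ∀ i, ∃ u, ClosedNbr G (v i) u ∧ ∀ j, j < i → ¬ G.Adj (v j) u

/-- The Z-Grundy domination number: the largest length of a Z-sequence. -/
noncomputable def grundyZ (G : SimpleGraph V) : ℕ :=
  sSup {k : ℕ | ∃ v : Fin k → V, IsZSeq G v}

/-- The Grundy domination number: the largest length of a dominating sequence. -/
noncomputable def grundyDom (G : SimpleGraph V) : ℕ :=
  sSup {k : ℕ | ∃ v : Fin k → V, IsDomSeq G v}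

/-- The Grundy total domination number: the largest length of a total dominating
sequence. -/
noncomputable def grundyTot (G : SimpleGraph V) : ℕ :=
  sSup {k : ℕ | ∃ v : Fin k → V, IsTotDomSeq G v}

/-- The L-Grundy domination number: the largest length of an L-sequence. -/
noncomputable def grundyL (G : SimpleGraph V) : ℕ :=
  sSup {k : ℕ | ∃ v : Fin k → V, IsLSeq G v}

/-- The largest length of a total dominating sequence using only vertices of `X`. -/
noncomputable def grundyTotOn (G : SimpleGraph V) (X : Set V) : ℕ :=
  sSup {k : ℕ | ∃ v : Fin k → V, IsTotDomSeq G v ∧ ∀ i, v i ∈ X}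

/-- The domination number: minimum size of a set `X` such that every vertex outside
`X` has a neighbor in `X`. -/
noncomputable def domNum (G : SimpleGraph V) : ℕ :=
  sInf {m : ℕ | ∃ X : Finset V, (∀ v, v ∉ X → ∃ u ∈ X, G.Adj v u) ∧ X.card = m}

/-- The vertex cover number: minimum size of a set of vertices meeting every edge. -/
noncomputable def vcNum (G : SimpleGraph V) : ℕ :=
  sInf {m : ℕ | ∃ C : Finset V, (∀ u w, G.Adj u w → u ∈ C ∨ w ∈ C) ∧ C.card = m}

/-- The family `S(G)` of real symmetric matrices whose off-diagonal entry `A i j`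
is nonzero exactly when `i` and `j` are adjacent in `G`. -/
def SFam (G : SimpleGraph V) : Set (Matrix V V ℝ) :=
  {A | A.IsSymm ∧ ∀ i j : V, i ≠ j → (A i j ≠ 0 ↔ G.Adj i j)}

/-- The family `S_ℓ̇(G)`: matrices in `S(G)` with all diagonal entries nonzero. -/
def SldFam (G : SimpleGraph V) : Set (Matrix V V ℝ) :=
  {A | A ∈ SFam G ∧ ∀ i : V, A i i ≠ 0}

/-- The family `S_0(G)`: matrices in `S(G)` with all diagonal entries zero. -/
def S0Fam (G : SimpleGraph V) : Set (Matrix V V ℝ) :=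
  {A | A ∈ SFam G ∧ ∀ i : V, A i i = 0}

/-- The bipartite graph `B_L(G)` on `{x_i} ∪ {y_i} ∪ {z_i}` (encoded as
`Sum.inl i`, `Sum.inr (Sum.inl i)`, `Sum.inr (Sum.inr i)`), with edges `{x i, y j}`
and `{x i, z j}` for every edge `{i, j}` of `G`, together with edges `{x i, y i}`
for every vertex `i`. -/
def BL (G : SimpleGraph V) : SimpleGraph (V ⊕ V ⊕ V) :=
  SimpleGraph.fromRel fun p q =>
    match p, q with
    | Sum.inl i, Sum.inr (Sum.inl j) => G.Adj i j ∨ i = j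
    | Sum.inl i, Sum.inr (Sum.inr j) => G.Adj i j
    | _, _ => False

/-!
The force `a i → b i` is L-valid exactly when `b i ∈ N[a i]` and `N(a i)` avoids
`b (i+1), …, b (k-1)`; so `a i` is precisely a witness in `N[b i] ∖ ⋃_{j>i} N(b j)`, the
L-sequence condition for `b i` in the reversed order.
-/

theorem closedNbr_comm (G : SimpleGraph V) {x y : V} : ClosedNbr G x y ↔ ClosedNbr G y x := by
  rw [ClosedNbr, ClosedNbr, eq_comm, G.adj_comm]

/-- `N[x] ∖ {y}` and `N(x) ∖ {y}` differ only by `x` itself when `x ≠ y`, so the two rules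
that make up CCR-Z_L merge into a single one. -/
theorem zLForce_iff {G : SimpleGraph V} {S : Set V} {x y : V} :
    ZLForce G S x y ↔ y ∉ S ∧ ClosedNbr G x y ∧ ∀ u, G.Adj x u → u ≠ y → u ∈ S := by
  rcases eq_or_ne x y with rfl | hxy
  · simp [ZLForce, ZelldForce, ClosedNbr]
  · simp [ZLForce, ZminusForce, ClosedNbr, hxy, hxy.symm]

theorem zLForce_tail_iff {G : SimpleGraph V} {k : ℕ} {b : Fin k → V}
    (hb : Function.Injective b) (i : Fin k) {x : V} :
    ZLForce G {v | ∀ j : Fin k, i ≤ j → v ≠ b j} x (b i) ↔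
      ClosedNbr G x (b i) ∧ ∀ j, i < j → ¬ G.Adj x (b j) := by
  have hbi : b i ∉ {v | ∀ j : Fin k, i ≤ j → v ≠ b j} := fun h => h i le_rfl rfl
  rw [zLForce_iff, and_iff_right hbi]
  refine and_congr_right fun _ => ⟨fun h j hij hadj => h _ hadj (hb.ne hij.ne') j hij.le rfl, ?_⟩
  rintro h u hu hui j hij rfl
  exact h j (lt_of_le_of_ne hij fun e => hui (congrArg b e.symm)) hu

theorem isLSeq_rev_iff {G : SimpleGraph V} {k : ℕ} {b : Fin k → V}
    (hb : Function.Injective b) :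
    IsLSeq G (fun i : Fin k => b i.rev) ↔
      ∀ i, ∃ u, ClosedNbr G u (b i) ∧ ∀ j, i < j → ¬ G.Adj u (b j) := by
  refine (and_iff_right (hb.comp Fin.rev_injective)).trans ?_
  rw [Fin.rev_surjective.forall]
  refine forall_congr' fun i => exists_congr fun u => and_congr ?_ ?_
  · simp only [Fin.rev_rev, closedNbr_comm]
  · rw [Fin.rev_surjective.forall]
    simp only [Fin.rev_lt_rev, Fin.rev_rev, G.adj_comm]

theorem statement_2_general {V : Type*} (G : SimpleGraph V) (k : ℕ)
    (b : Fin k → V) (hb : Function.Injective b) :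
    (∃ a : Fin k → V, ∀ i : Fin k,
        ZLForce G {v | ∀ j : Fin k, i ≤ j → v ≠ b j} (a i) (b i)) ↔
      IsLSeq G (fun i : Fin k => b i.rev) := by
  simp only [zLForce_tail_iff hb, isLSeq_rev_iff hb]
  rw [Classical.skolem]

/-- For distinct vertices `b 0, …, b (k-1)` of `G`, there exist
`a 0, …, a (k-1)` such that each force `a i → b i` is valid under CCR-Z_L w.r.t.
the blue set `V(G) \ {b i, …, b (k-1)}` iff the reversed sequence
`(b (k-1), …, b 0)` is an L-sequence of `G`. -/
theorem statement_2 {V : Type*} [Fintype V] (G : SimpleGraph V) (k : ℕ)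
    (b : Fin k → V) (hb : Function.Injective b) :
    (∃ a : Fin k → V, ∀ i : Fin k,
        ZLForce G {v | ∀ j : Fin k, i ≤ j → v ≠ b j} (a i) (b i)) ↔
      IsLSeq G (fun i : Fin k => b i.rev) :=
  statement_2_general G k b hb

end ZFGrundy
end

section
/- For every finite simple graph G on n vertices, Z_ℓ̇(G) = n − γ_gr(G). -/
namespace ZFGrundy

variable {V : Type*}

/-!
A dominating sequence `v` together with a choice of vertices
`u i ∈ N[v i] \ ⋃_{j<i} N[v j]` is the same thing as a CCR-Z_ℓ̇ forcing chronology
`v i → u i`: the force `v i → u i` is valid exactly when no later target `u j` lies in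
`N[v i]`, which is the domination condition read from the other side. The targets are
distinct, so the zero forcing sets are precisely the complements of the `k`-element target
sets of dominating sequences of length `k`.
-/

open Function

lemma injective_of_triangular {α β : Type*} {k : ℕ} (R : α → β → Prop) {a : Fin k → α}
    {b : Fin k → β} (hdiag : ∀ i, R (a i) (b i)) (hlow : ∀ i j, j < i → ¬ R (a j) (b i)) :
    Injective a ∧ Injective b := by
  have hne : ∀ i j, j < i → a j ≠ a i ∧ b j ≠ b i := fun i j hji =>
    ⟨fun h => hlow i j hji (h ▸ hdiag i), fun h => hlow i j hji (h ▸ hdiag j)⟩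
  refine ⟨fun i j h => ?_, fun i j h => ?_⟩ <;> by_contra hij <;>
    rcases lt_or_gt_of_ne hij with hlt | hlt
  exacts [(hne j i hlt).1 h, (hne i j hlt).1 h.symm, (hne j i hlt).2 h, (hne i j hlt).2 h.symm]

lemma card_add_eq_card_of_compl_eq_range [Fintype V] {B : Finset V} {k : ℕ} {b : Fin k → V}
    (hb : Injective b) (hB : ∀ v, v ∉ B ↔ ∃ i, b i = v) : B.card + k = Fintype.card V := by
  classical
  have hcompl : Bᶜ = Finset.univ.image b := by
    ext v
    simpa using hB v
  rw [← Finset.card_add_card_compl B, hcompl, Finset.card_image_of_injective _ hb,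
    Finset.card_univ, Fintype.card_fin]

section

variable (G : SimpleGraph V)

lemma isDomSeq_iff_exists_private {k : ℕ} (v : Fin k → V) :
    IsDomSeq G v ↔ ∃ u : Fin k → V, (∀ i, ClosedNbr G (v i) (u i)) ∧
      ∀ i j, j < i → ¬ ClosedNbr G (v j) (u i) := by
  constructor
  · rintro ⟨-, hpriv⟩
    choose u hu hlow using hpriv
    exact ⟨u, hu, hlow⟩
  · rintro ⟨u, hu, hlow⟩
    exact ⟨(injective_of_triangular _ hu hlow).1, fun i => ⟨u i, hu i, hlow i⟩⟩

lemma zelldForce_chronology_iff {k : ℕ} {b : Fin k → V} (hb : Injective b) (a : Fin k → V)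
    (i : Fin k) :
    ZelldForce G {v | ∀ j, i ≤ j → v ≠ b j} (a i) (b i) ↔
      ClosedNbr G (a i) (b i) ∧ ∀ j, i < j → ¬ ClosedNbr G (a i) (b j) := by
  constructor
  · rintro ⟨-, hdiag, hblue⟩
    exact ⟨hdiag, fun j hij hj => hblue (b j) hj (hb.ne hij.ne') j hij.le rfl⟩
  · rintro ⟨hdiag, hlater⟩
    refine ⟨fun h => h i le_rfl rfl, hdiag, fun u hu hne j hij hj => ?_⟩
    rcases hij.lt_or_eq with hlt | rfl
    · exact hlater j hlt (hj ▸ hu)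
    · exact hne hj

lemma IsDomSeq.exists_isZFS [Fintype V] {k : ℕ} {v : Fin k → V} (hv : IsDomSeq G v) :
    ∃ B : Finset V, IsZFS G ZelldForce B ∧ B.card + k = Fintype.card V := by
  classical
  obtain ⟨u, hu, hlow⟩ := (isDomSeq_iff_exists_private G v).1 hv
  have hu_inj := (injective_of_triangular _ hu hlow).2
  have hB : ∀ w, w ∉ (Finset.univ.image u)ᶜ ↔ ∃ i, u i = w := by simp
  have hforce : ∀ i, ZelldForce G {w | ∀ j, i ≤ j → w ≠ u j} (v i) (u i) := fun i =>
    (zelldForce_chronology_iff G hu_inj v i).2 ⟨hu i, fun j hij => hlow j i hij⟩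
  exact ⟨_, ⟨k, u, v, hu_inj, hB, hforce⟩, card_add_eq_card_of_compl_eq_range hu_inj hB⟩

lemma IsZFS.exists_isDomSeq [Fintype V] {B : Finset V} (hB : IsZFS G ZelldForce B) :
    ∃ (k : ℕ) (v : Fin k → V), IsDomSeq G v ∧ B.card + k = Fintype.card V := by
  obtain ⟨k, b, a, hb, hcompl, hforce⟩ := hB
  have hchron := fun i => (zelldForce_chronology_iff G hb a i).1 (hforce i)
  exact ⟨k, a, (isDomSeq_iff_exists_private G a).2 ⟨b, fun i => (hchron i).1,
    fun i j hji => (hchron j).2 i hji⟩, card_add_eq_card_of_compl_eq_range hb hcompl⟩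

lemma bddAbove_domSeq_lengths [Finite V] :
    BddAbove {k : ℕ | ∃ v : Fin k → V, IsDomSeq G v} := by
  have := Fintype.ofFinite V
  exact ⟨Fintype.card V, fun k ⟨v, hv, _⟩ => by
    simpa using Fintype.card_le_of_injective v hv⟩

lemma IsDomSeq.le_grundyDom [Finite V] {k : ℕ} {v : Fin k → V} (hv : IsDomSeq G v) :
    k ≤ grundyDom G :=
  le_csSup (bddAbove_domSeq_lengths G) ⟨v, hv⟩

lemma exists_isDomSeq_grundyDom [Finite V] : ∃ v : Fin (grundyDom G) → V, IsDomSeq G v :=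
  Nat.sSup_mem (s := {k | ∃ v : Fin k → V, IsDomSeq G v})
    ⟨0, Fin.elim0, fun i => i.elim0, fun i => i.elim0⟩ (bddAbove_domSeq_lengths G)

end

/-- `Z_ℓ̇(G) = n - γ_gr(G)` for every finite simple graph `G`
on `n` vertices. -/
theorem statement_4 {V : Type*} [Fintype V] (G : SimpleGraph V) :
    zfNum G ZelldForce = Fintype.card V - grundyDom G := by
  obtain ⟨v, hv⟩ := exists_isDomSeq_grundyDom G
  obtain ⟨B, hB, hBcard⟩ := hv.exists_isZFS G
  have hle : zfNum G ZelldForce ≤ Fintype.card V - grundyDom G :=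
    Nat.sInf_le ⟨B, hB, by omega⟩
  obtain ⟨B', hB', hB'card⟩ : zfNum G ZelldForce ∈
      {m | ∃ B : Finset V, IsZFS G ZelldForce B ∧ B.card = m} :=
    Nat.sInf_mem ⟨B.card, B, hB, rfl⟩
  obtain ⟨k, w, hw, hk⟩ := hB'.exists_isDomSeq G
  have := hw.le_grundyDom G
  omega

end ZFGrundy
end

section
/- For every finite simple graph G on n vertices, Z_−(G) = n − γ^t_gr(G). -/
namespace ZFGrundy

variable {V : Type*}

/-!
In a Z_−-forcing process `a i → b i`, the vertex `b i` is adjacent to `a i` and, because all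
later targets `b j` are still white when `a i` forces, `a i` has no neighbour among them.
Read backwards this says that `b i ∈ N(a i) ∖ ⋃_{j<i} N(a j)`, so the forcing vertices form a
total dominating sequence with footprints `b i`; conversely every total dominating sequence
with chosen footprints is such a process, forcing exactly the complement of its footprints.
Hence a zero forcing set of size `n - k` exists exactly when a total dominating sequence of
length `k` does.
-/

open Function Finset

section Triangular

variable {α β ι : Type*} [LinearOrder ι] {R : α → β → Prop} {a : ι → α} {b : ι → β}

theorem injective_left_of_triangular (hdiag : ∀ i, R (a i) (b i))
    (hlow : ∀ i j, i < j → ¬ R (a i) (b j)) : Injective a := by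
  intro i j hij
  by_contra hne
  rcases lt_or_gt_of_ne hne with hlt | hlt
  · exact hlow i j hlt (hij ▸ hdiag j)
  · exact hlow j i hlt (hij ▸ hdiag i)

theorem injective_right_of_triangular (hdiag : ∀ i, R (a i) (b i))
    (hlow : ∀ i j, i < j → ¬ R (a i) (b j)) : Injective b := by
  intro i j hij
  by_contra hne
  rcases lt_or_gt_of_ne hne with hlt | hlt
  · exact hlow i j hlt (hij ▸ hdiag i)
  · exact hlow j i hlt (hij ▸ hdiag j)

end Triangular

variable {G : SimpleGraph V} {k : ℕ}

/-- `b i` is a footprint of `a i` in the sequence `a`: it lies in `N(a i) ∖ ⋃_{j<i} N(a j)`. -/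
def TotFootprints (G : SimpleGraph V) (a b : Fin k → V) : Prop :=
  (∀ i, G.Adj (a i) (b i)) ∧ ∀ i j, i < j → ¬ G.Adj (a i) (b j)

theorem isTotDomSeq_iff_exists_totFootprints {a : Fin k → V} :
    IsTotDomSeq G a ↔ ∃ b, TotFootprints G a b := by
  constructor
  · rintro ⟨-, hfoot⟩
    choose b hadj hnew using hfoot
    exact ⟨b, hadj, fun i j hij => hnew j i hij⟩
  · rintro ⟨b, hdiag, hlow⟩
    exact ⟨injective_left_of_triangular hdiag hlow,
      fun j => ⟨b j, hdiag j, fun i hij => hlow i j hij⟩⟩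

theorem zminusForce_iff {b : Fin k → V} (hb : Injective b) (i : Fin k) (x : V) :
    ZminusForce G {v | ∀ j, i ≤ j → v ≠ b j} x (b i) ↔
      G.Adj x (b i) ∧ ∀ j, i < j → ¬ G.Adj x (b j) := by
  simp only [ZminusForce, Set.mem_ofPred_eq]
  constructor
  · rintro ⟨-, hadj, hblue⟩
    exact ⟨hadj, fun j hij h => hblue (b j) h (hb.ne hij.ne') j hij.le rfl⟩
  · rintro ⟨hadj, hlater⟩
    refine ⟨fun h => h i le_rfl rfl, hadj, fun u hu hne j hij => ?_⟩
    rintro rfl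
    rcases hij.lt_or_eq with hlt | rfl
    · exact hlater j hlt hu
    · exact hne rfl

theorem isZFS_zminusForce_iff {B : Finset V} :
    IsZFS G ZminusForce B ↔
      ∃ (k : ℕ) (a b : Fin k → V), TotFootprints G a b ∧ ∀ v, v ∉ B ↔ ∃ i, b i = v := by
  constructor
  · rintro ⟨k, b, a, hb, hcompl, hforce⟩
    simp only [zminusForce_iff hb] at hforce
    exact ⟨k, a, b, ⟨fun i => (hforce i).1, fun i j => (hforce i).2 j⟩, hcompl⟩
  · rintro ⟨k, a, b, ⟨hdiag, hlow⟩, hcompl⟩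
    have hb := injective_right_of_triangular hdiag hlow
    exact ⟨k, b, a, hb, hcompl, fun i => (zminusForce_iff hb i _).2 ⟨hdiag i, hlow i⟩⟩

theorem card_eq_card_sub_of_compl_eq_range [Fintype V] {B : Finset V} {b : Fin k → V}
    (hb : Injective b) (hcompl : ∀ v, v ∉ B ↔ ∃ i, b i = v) :
    B.card = Fintype.card V - k := by
  classical
  have hrange : Bᶜ = univ.image b := by
    ext v
    simpa using hcompl v
  have := card_compl B
  rw [hrange, card_image_of_injective _ hb, card_univ, Fintype.card_fin] at this
  have := card_le_univ B
  omega

theorem exists_isZFS_zminusForce_card_iff [Fintype V] {m : ℕ} :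
    (∃ B : Finset V, IsZFS G ZminusForce B ∧ B.card = m) ↔
      ∃ k, (∃ a : Fin k → V, IsTotDomSeq G a) ∧ Fintype.card V - k = m := by
  classical
  simp only [isZFS_zminusForce_iff, isTotDomSeq_iff_exists_totFootprints]
  constructor
  · rintro ⟨B, ⟨k, a, b, ⟨hdiag, hlow⟩, hcompl⟩, rfl⟩
    exact ⟨k, ⟨a, b, hdiag, hlow⟩,
      (card_eq_card_sub_of_compl_eq_range (injective_right_of_triangular hdiag hlow)
        hcompl).symm⟩
  · rintro ⟨k, ⟨a, b, hdiag, hlow⟩, rfl⟩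
    have hcompl : ∀ v, v ∉ (univ.image b)ᶜ ↔ ∃ i, b i = v := by simp
    exact ⟨_, ⟨k, a, b, ⟨hdiag, hlow⟩, hcompl⟩,
      card_eq_card_sub_of_compl_eq_range (injective_right_of_triangular hdiag hlow) hcompl⟩

theorem isGreatest_grundyTot [Finite V] (G : SimpleGraph V) :
    IsGreatest {k | ∃ a : Fin k → V, IsTotDomSeq G a} (grundyTot G) := by
  have hbdd : BddAbove {k | ∃ a : Fin k → V, IsTotDomSeq G a} := by
    refine ⟨Nat.card V, ?_⟩
    rintro k ⟨a, ha, -⟩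
    simpa using Nat.card_le_card_of_injective a ha
  have hzero : (0 : ℕ) ∈ {k | ∃ a : Fin k → V, IsTotDomSeq G a} :=
    ⟨Fin.elim0, fun i => i.elim0, fun i => i.elim0⟩
  exact ⟨Nat.sSup_mem ⟨0, hzero⟩ hbdd, fun _ hk => le_csSup hbdd hk⟩

/-- `Z_−(G) = n - γ^t_gr(G)` for every finite simple graph `G`
on `n` vertices. -/
theorem statement_5 {V : Type*} [Fintype V] (G : SimpleGraph V) :
    zfNum G ZminusForce = Fintype.card V - grundyTot G := by
  have hsets : {m | ∃ B : Finset V, IsZFS G ZminusForce B ∧ B.card = m} =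
      (Fintype.card V - ·) '' {k | ∃ a : Fin k → V, IsTotDomSeq G a} := by
    ext m
    exact exists_isZFS_zminusForce_card_iff
  rw [zfNum, hsets]
  exact (antitone_const_tsub.map_isGreatest (isGreatest_grundyTot G)).csInf_eq

end ZFGrundy
end

section
/- For every finite simple graph G on n vertices, 2Z_ℓ̇(G) ≤ n + Z_L(G). -/
namespace ZFGrundy

variable {V : Type*}

/-!
Take a chronological list of Z_L-forces from a minimum Z_L-forcing set `B`, and call a step `j`
*white-forcing* if the vertex it colours has already forced earlier, while still white. A white
vertex can only force by a non-loop Z_−-force, and then all its other neighbours are blue; so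
the vertex forcing at a white-forcing step is already blue at that moment. Hence the earlier step
at which the white vertex forced is not white-forcing, which matches white-forcing steps
injectively with the others: at most half of the `n - |B|` steps are white-forcing. Adding the
targets of the white-forcing steps to `B` turns every remaining step into a valid Z_ℓ̇-force, and
gives a Z_ℓ̇-forcing set of size at most `(n + |B|) / 2`.
-/

variable {G : SimpleGraph V} {S T : Set V} {x y : V}

lemma ZminusForce.zelldForce (h : ZminusForce G S x y) (hST : S ⊆ T) (hy : y ∉ T)
    (hx : x ∈ T) : ZelldForce G T x y := by
  refine ⟨hy, Or.inr h.2.1, fun u hu hne => ?_⟩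
  rcases hu with rfl | hadj
  exacts [hx, hST (h.2.2 u hadj hne)]

lemma ZelldForce.mono (h : ZelldForce G S x y) (hST : S ⊆ T) (hy : y ∉ T) :
    ZelldForce G T x y :=
  ⟨hy, h.2.1, fun u hu hne => hST (h.2.2 u hu hne)⟩

lemma ZLForce.zelldForce (h : ZLForce G S x y) (hST : S ⊆ T) (hy : y ∉ T)
    (hx : x ≠ y → x ∈ T) : ZelldForce G T x y := by
  rcases h with ⟨hne, h⟩ | ⟨-, h⟩
  exacts [h.zelldForce hST hy (hx hne), h.mono hST hy]

lemma isZFS_of_forces_on_finset {ι : Type*} [LinearOrder ι]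
    {force : SimpleGraph V → Set V → V → V → Prop} {B : Finset V} (J : Finset ι)
    {b a : ι → V} (hb : Set.InjOn b J) (hB : ∀ v, v ∉ B ↔ ∃ j ∈ J, b j = v)
    (hforce : ∀ i ∈ J, force G {v | ∀ j ∈ J, i ≤ j → v ≠ b j} (a i) (b i)) :
    IsZFS G force B := by
  set e := J.orderIsoOfFin rfl
  refine ⟨J.card, fun i => b (e i), fun i => a (e i), ?_, ?_, fun i => ?_⟩
  · exact fun i i' h => e.injective (Subtype.val_injective (hb (e i).2 (e i').2 h))
  · intro v
    rw [hB]
    constructor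
    · rintro ⟨j, hj, rfl⟩
      exact ⟨e.symm ⟨j, hj⟩, by simp⟩
    · rintro ⟨i, rfl⟩
      exact ⟨e i, (e i).2, rfl⟩
  · convert hforce (e i) (e i).2 using 2
    ext v
    refine ⟨fun hv j hj hij => ?_, fun hv i' hii' => hv _ (e i').2 (e.monotone hii')⟩
    obtain ⟨i', hi'⟩ := e.surjective ⟨j, hj⟩
    obtain rfl : (e i' : ι) = j := congrArg Subtype.val hi'
    exact hv i' (e.le_iff_le.mp hij)

section Chronology

variable {ι : Type*} [LinearOrder ι]

/-- A chronological list of forces `a i → b i` under the rule `force`. -/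
def IsChronology (G : SimpleGraph V) (force : SimpleGraph V → Set V → V → V → Prop)
    (b a : ι → V) : Prop :=
  Function.Injective b ∧ ∀ i, force G {v | ∀ j, i ≤ j → v ≠ b j} (a i) (b i)

variable {b a : ι → V}

lemma IsChronology.forcer_ne_of_forces_while_white (h : IsChronology G ZLForce b a)
    {i j l : ι} (hij : i < j) (hab : a i = b j) (hjl : j < l) : a j ≠ b l := by
  intro hal
  obtain ⟨hb, hforce⟩ := h
  obtain ⟨-, -, hblue⟩ : ZminusForce G _ (a i) (b i) := by
    rcases hforce i with ⟨-, hi⟩ | ⟨hloop, -⟩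
    exacts [hi, absurd (hb (hloop.symm.trans hab)) hij.ne]
  rcases hforce j with ⟨-, -, hadj, -⟩ | ⟨hloop, -⟩
  · have hbl : b l ∈ {v | ∀ m, i ≤ m → v ≠ b m} :=
      hblue (b l) (hab ▸ hal ▸ hadj.symm) (fun e => (hij.trans hjl).ne' (hb e))
    exact hbl l (hij.trans hjl).le rfl
  · exact hjl.ne (hb (hal.symm.trans hloop)).symm

variable [Fintype ι] [DecidableEq V]

def whiteForcingSteps (b a : ι → V) : Finset ι :=
  {j | ∃ i < j, a i = b j}

lemma IsChronology.two_mul_card_whiteForcingSteps_le (h : IsChronology G ZLForce b a) :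
    2 * (whiteForcingSteps b a).card ≤ Fintype.card ι := by
  set W := whiteForcingSteps b a
  have hsub : W.image b ⊆ Wᶜ.image a := by
    intro v hv
    obtain ⟨j, hj, rfl⟩ := Finset.mem_image.mp hv
    obtain ⟨i, hij, hab⟩ := (Finset.mem_filter.mp hj).2
    refine Finset.mem_image.mpr ⟨i, Finset.mem_compl.mpr fun hi => ?_, hab⟩
    obtain ⟨i', hi'i, hi'⟩ := (Finset.mem_filter.mp hi).2
    exact h.forcer_ne_of_forces_while_white hi'i hi' hij hab
  have hW : W.card ≤ Wᶜ.card := calc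
    W.card = (W.image b).card := (Finset.card_image_of_injective W h.1).symm
    _ ≤ (Wᶜ.image a).card := Finset.card_le_card hsub
    _ ≤ Wᶜ.card := Finset.card_image_le
  have := Finset.card_add_card_compl W
  omega

lemma IsChronology.zelldForce_of_notMem_whiteForcingSteps (h : IsChronology G ZLForce b a)
    {i : ι} (hi : i ∈ (whiteForcingSteps b a)ᶜ) :
    ZelldForce G {v | ∀ j ∈ (whiteForcingSteps b a)ᶜ, i ≤ j → v ≠ b j} (a i) (b i) := by
  set W := whiteForcingSteps b a
  obtain ⟨hb, hforce⟩ := h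
  have hW : ∀ j ∈ W, ∀ l ∈ Wᶜ, b j ≠ b l := fun j hj l hl e =>
    Finset.mem_compl.mp hl (hb e ▸ hj)
  refine (hforce i).zelldForce (fun v hv j _ hij => hv j hij) (fun hbi => hbi i hi le_rfl rfl)
    fun hne => ?_
  by_cases hblue : ∀ j, i ≤ j → a i ≠ b j
  · exact fun j _ hij => hblue j hij
  · push Not at hblue
    obtain ⟨j, hij, hab⟩ := hblue
    have hj : j ∈ W := Finset.mem_filter.mpr
      ⟨Finset.mem_univ j, i, lt_of_le_of_ne hij fun e => hne (e ▸ hab), hab⟩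
    exact fun l hl _ => hab ▸ hW j hj l hl

end Chronology

lemma exists_isZFS_zelldForce_two_mul_card_le [Fintype V] {B : Finset V}
    (hB : IsZFS G ZLForce B) :
    ∃ B' : Finset V, IsZFS G ZelldForce B' ∧ 2 * B'.card ≤ Fintype.card V + B.card := by
  classical
  obtain ⟨k, b, a, hb, hBb, hforce⟩ := hB
  have hchron : IsChronology G ZLForce b a := ⟨hb, hforce⟩
  set W := whiteForcingSteps b a
  refine ⟨(Wᶜ.image b)ᶜ, isZFS_of_forces_on_finset Wᶜ hb.injOn (by simp)
    fun i hi => hchron.zelldForce_of_notMem_whiteForcingSteps hi, ?_⟩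
  have hBc : Bᶜ = Finset.univ.image b := by
    ext v
    simp [hBb]
  have hn : B.card + k = Fintype.card V := by
    rw [← Finset.card_add_card_compl B, hBc, Finset.card_image_of_injective _ hb,
      Finset.card_univ, Fintype.card_fin]
  have hW : 2 * W.card ≤ k := by
    simpa using hchron.two_mul_card_whiteForcingSteps_le
  have hB' := Finset.card_add_card_compl (Wᶜ.image b)
  have hWc := Finset.card_add_card_compl W
  rw [Finset.card_image_of_injective _ hb] at hB'
  rw [Fintype.card_fin] at hWc
  omega

lemma zfNum_le_card {force : SimpleGraph V → Set V → V → V → Prop} {B : Finset V}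
    (hB : IsZFS G force B) : zfNum G force ≤ B.card :=
  Nat.sInf_le ⟨B, hB, rfl⟩

lemma isZFS_univ [Fintype V] (force : SimpleGraph V → Set V → V → V → Prop) :
    IsZFS G force Finset.univ :=
  isZFS_of_forces_on_finset (∅ : Finset (Fin 0)) (b := Fin.elim0) (a := Fin.elim0)
    (by simp) (by simp) (by simp)

lemma exists_isZFS_card_eq_zfNum [Fintype V]
    (force : SimpleGraph V → Set V → V → V → Prop) :
    ∃ B : Finset V, IsZFS G force B ∧ B.card = zfNum G force :=
  Nat.sInf_mem (s := {m | ∃ B : Finset V, IsZFS G force B ∧ B.card = m})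
    ⟨_, _, isZFS_univ force, rfl⟩

/-- `2 Z_ℓ̇(G) ≤ n + Z_L(G)` for every finite simple graph `G`
on `n` vertices. -/
theorem statement_8 {V : Type*} [Fintype V] (G : SimpleGraph V) :
    2 * zfNum G ZelldForce ≤ Fintype.card V + zfNum G ZLForce := by
  obtain ⟨B, hB, hBcard⟩ := exists_isZFS_card_eq_zfNum (G := G) ZLForce
  obtain ⟨B', hB', hcard⟩ := exists_isZFS_zelldForce_two_mul_card_le hB
  have := zfNum_le_card hB'
  omega

end ZFGrundy
end

section
/- Let G be a finite simple graph on n vertices with no isolated vertices. Then Z(G) ≤ n − γ(G), where γ(G) is the domination number of G. -/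
namespace ZFGrundy

variable {V : Type*}

/-!
Take a Z-sequence `v₁, …, v_k` of maximum length, with footprints
`u_i ∈ N(v_i) ∖ ⋃_{j<i} N[v_j]`. Coloring `u₁, …, u_k` blue in this order, each `u_i` is
forced by `v_i`: the other vertices of `N[v_i]` are not footprints of later terms. So
`V ∖ {u₁, …, u_k}` is a zero forcing set and `Z(G) ≤ n - k`. By maximality no vertex `w`
can be appended, i.e. `N(w) ⊆ ⋃_j N[v_j]`; without isolated vertices every vertex lies
in some `N(w)`, so `{v₁, …, v_k}` is dominating and `γ(G) ≤ k`.
-/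

variable {G : SimpleGraph V}

theorem IsZSeq.card_le [Fintype V] {k : ℕ} {v : Fin k → V} (hv : IsZSeq G v) :
    k ≤ Fintype.card V := by
  simpa using Fintype.card_le_of_injective v hv.1

theorem isZSeq_elim0 : IsZSeq G (Fin.elim0 : Fin 0 → V) :=
  ⟨fun a => a.elim0, fun i => i.elim0⟩

theorem bddAbove_zSeq_lengths [Fintype V] :
    BddAbove {k : ℕ | ∃ v : Fin k → V, IsZSeq G v} :=
  ⟨Fintype.card V, fun _ ⟨_, hv⟩ => hv.card_le⟩

theorem exists_isZSeq_grundyZ [Fintype V] (G : SimpleGraph V) :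
    ∃ v : Fin (grundyZ G) → V, IsZSeq G v :=
  Nat.sSup_mem (s := {k : ℕ | ∃ v : Fin k → V, IsZSeq G v}) ⟨0, _, isZSeq_elim0⟩
    bddAbove_zSeq_lengths

theorem IsZSeq.snoc {k : ℕ} {v : Fin k → V} (hv : IsZSeq G v) {w u : V} (hwu : G.Adj w u)
    (hu : ∀ j, ¬ ClosedNbr G (v j) u) : IsZSeq G (Fin.snoc v w : Fin (k + 1) → V) := by
  have hw : w ∉ Set.range v := by
    rintro ⟨j, rfl⟩
    exact hu j (Or.inr hwu)
  refine ⟨Fin.snoc_injective_of_injective hv.1 hw, fun i => ?_⟩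
  induction i using Fin.lastCases with
  | last =>
    refine ⟨u, by simpa using hwu, fun j hj => ?_⟩
    obtain ⟨j, rfl⟩ := Fin.exists_castSucc_eq.2 hj.ne
    simpa using hu j
  | cast i =>
    obtain ⟨x, hix, hx⟩ := hv.2 i
    refine ⟨x, by simpa using hix, fun j hj => ?_⟩
    obtain ⟨j, rfl⟩ := Fin.exists_castSucc_eq.2 (hj.trans (Fin.castSucc_lt_last i)).ne
    simpa using hx j (Fin.castSucc_lt_castSucc_iff.1 hj)

theorem exists_closedNbr_of_isZSeq_grundyZ [Fintype V] {v : Fin (grundyZ G) → V}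
    (hv : IsZSeq G v) {w u : V} (hwu : G.Adj w u) : ∃ j, ClosedNbr G (v j) u := by
  by_contra! hu
  exact Nat.not_succ_le_self _ (le_csSup bddAbove_zSeq_lengths ⟨_, hv.snoc hwu hu⟩)

theorem domNum_le_grundyZ [Fintype V] (hiso : ∀ v : V, ∃ u : V, G.Adj v u) :
    domNum G ≤ grundyZ G := by
  classical
  obtain ⟨v, hv⟩ := exists_isZSeq_grundyZ G
  refine Nat.sInf_le ⟨Finset.univ.image v, fun x hx => ?_, ?_⟩
  · obtain ⟨y, hyx⟩ := hiso x
    obtain ⟨j, rfl | hjx⟩ := exists_closedNbr_of_isZSeq_grundyZ hv hyx.symm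
    · exact absurd (Finset.mem_image_of_mem v (Finset.mem_univ j)) hx
    · exact ⟨v j, Finset.mem_image_of_mem v (Finset.mem_univ j), hjx.symm⟩
  · rw [Finset.card_image_of_injective _ hv.1, Finset.card_univ, Fintype.card_fin]

section Footprints

variable {k : ℕ} {v u : Fin k → V} (hadj : ∀ i, G.Adj (v i) (u i))
  (hfoot : ∀ i j, j < i → ¬ ClosedNbr G (v j) (u i))
include hadj hfoot

theorem injective_of_footprints : Function.Injective u := by
  intro a b hab
  rcases lt_trichotomy a b with h | rfl | h
  · exact absurd (Or.inr (hab ▸ hadj a)) (hfoot b a h)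
  · rfl
  · exact absurd (Or.inr (hab ▸ hadj b)) (hfoot a b h)

theorem isZFS_compl_image_footprints [Fintype V] [DecidableEq V] :
    IsZFS G ZForce (Finset.univ \ Finset.univ.image u) := by
  refine ⟨k, u, v, injective_of_footprints hadj hfoot, fun x => by simp, fun i => ?_⟩
  refine ⟨fun hblue => hblue i le_rfl rfl, hadj i, fun x hx hxi j hij => ?_⟩
  rcases hij.eq_or_lt with rfl | hij
  · exact hxi
  · rintro rfl
    exact hfoot j i hij hx

theorem zfNum_le_card_sub_of_footprints [Fintype V] :
    zfNum G ZForce ≤ Fintype.card V - k := by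
  classical
  refine Nat.sInf_le ⟨_, isZFS_compl_image_footprints hadj hfoot, ?_⟩
  rw [Finset.card_sdiff_of_subset (Finset.subset_univ _), Finset.card_univ,
    Finset.card_image_of_injective _ (injective_of_footprints hadj hfoot), Finset.card_univ,
    Fintype.card_fin]

end Footprints

theorem zfNum_le_card_sub_grundyZ [Fintype V] (G : SimpleGraph V) :
    zfNum G ZForce ≤ Fintype.card V - grundyZ G := by
  obtain ⟨v, -, hv⟩ := exists_isZSeq_grundyZ G
  choose u hadj hfoot using hv
  exact zfNum_le_card_sub_of_footprints hadj hfoot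

/-- if `G` is a finite simple graph on `n` vertices without isolated
vertices, then `Z(G) ≤ n - γ(G)`. -/
theorem statement_10 {V : Type*} [Fintype V] (G : SimpleGraph V)
    (hiso : ∀ v : V, ∃ u : V, G.Adj v u) :
    zfNum G ZForce ≤ Fintype.card V - domNum G :=
  (zfNum_le_card_sub_grundyZ G).trans (Nat.sub_le_sub_left (domNum_le_grundyZ hiso) _)

end ZFGrundy
end

section
/- For every finite simple graph G, γ_gr(G) ≤ mr_ℓ̇(G); that is, every dominating sequence of G has length at most the rank of every matrix in S_ℓ̇(G). -/
theorem Matrix.rank_eq_card_of_isLowerTriangular {m R : Type*} [Fintype m] [LinearOrder m]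
    [CommRing R] [IsDomain R] {M : Matrix m m R} (hM : M.IsLowerTriangular)
    (hdiag : ∀ i, M i i ≠ 0) : M.rank = Fintype.card m := by
  classical
  refine Matrix.rank_of_det_ne_zero ?_
  rw [Matrix.det_of_isLowerTriangular M hM]
  exact Finset.prod_ne_zero_iff.mpr fun i _ => hdiag i

namespace ZFGrundy

variable {V : Type*} {G : SimpleGraph V} {A : Matrix V V ℝ}

theorem entry_eq_zero_of_not_closedNbr (hA : A ∈ SFam G) {x y : V} (h : ¬ ClosedNbr G x y) :
    A x y = 0 := by
  simp only [ClosedNbr, not_or] at h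
  exact not_not.mp fun hxy => h.2 ((hA.2 x y fun hxy' => h.1 hxy'.symm).mp hxy)

theorem entry_ne_zero_of_closedNbr (hA : A ∈ SldFam G) {x y : V} (h : ClosedNbr G x y) :
    A x y ≠ 0 := by
  rcases h with rfl | hadj
  · exact hA.2 y
  · exact (hA.1.2 x y hadj.ne).mpr hadj

/-- Pairing each `v i` with a vertex it newly dominates selects a lower triangular submatrix. -/
theorem IsDomSeq.exists_isLowerTriangular_submatrix {k : ℕ} {v : Fin k → V} (hv : IsDomSeq G v)
    (hA : A ∈ SldFam G) :
    ∃ u : Fin k → V, (A.submatrix v u).IsLowerTriangular ∧ ∀ i, A (v i) (u i) ≠ 0 := by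
  choose u hu_nbr hu_new using hv.2
  exact ⟨u, fun i j hji => entry_eq_zero_of_not_closedNbr hA.1 (hu_new j i hji),
    fun i => entry_ne_zero_of_closedNbr hA (hu_nbr i)⟩

/-- `γ_gr(G) ≤ mr_ℓ̇(G)`: every dominating sequence of `G` has length
at most the rank of every matrix in `S_ℓ̇(G)`. -/
theorem statement_12 {V : Type*} [Fintype V] (G : SimpleGraph V)
    (k : ℕ) (v : Fin k → V) (hv : IsDomSeq G v)
    (A : Matrix V V ℝ) (hA : A ∈ SldFam G) :
    k ≤ A.rank := by
  obtain ⟨u, hlower, hdiag⟩ := hv.exists_isLowerTriangular_submatrix hA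
  calc k = (A.submatrix v u).rank := by
        rw [Matrix.rank_eq_card_of_isLowerTriangular hlower hdiag, Fintype.card_fin]
    _ ≤ A.rank := A.rank_submatrix_le v u

end ZFGrundy
end
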